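/- Let Q ⊂ ℤ² be finite, λ > 0, ε > 0, α : Q → ℝ, and let g : Q → ℝ be the unique solution of (−Δ^N_Q g)_x + λ g_x = ε α_x for all x ∈ Q. Then for every σ : Q → S¹ (unit circle in ℝ²): −(1/2) Σ_{{x,y}⊆Q, x∼y} ‖σ_x − σ_y‖² + ε Σ_{x∈Q} α_x (σ_x·e₂) = (1/2) E_Q(g) − (1/2) E_Q(σ·e₁) − (1/2) E_Q(σ·e₂ − g) + λ Σ_{x∈Q} (σ_x·e₂) g_x, where σ·e_i denotes the scalar function x ↦ σ_x·e_i. -/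
import Mathlib


open Finset

/-- Nearest neighbours of a site of `ℤ²` (Euclidean distance 1). -/
def nbrs (x : ℤ × ℤ) : Finset (ℤ × ℤ) :=
  {(x.1 + 1, x.2), (x.1 - 1, x.2), (x.1, x.2 + 1), (x.1, x.2 - 1)}

/-- `E_Q(f)`: Dirichlet energy of a scalar function over unordered
nearest-neighbour pairs inside `Q` (half the ordered sum). -/
noncomputable def eInt (Q : Finset (ℤ × ℤ)) (f : ℤ × ℤ → ℝ) : ℝ :=
  (1 / 2) * ∑ x ∈ Q, ∑ y ∈ Q ∩ nbrs x, (f x - f y) ^ 2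

lemma mem_nbrs_symm {x y : ℤ × ℤ} : y ∈ nbrs x ↔ x ∈ nbrs y := by
  simp [nbrs, Prod.ext_iff]
  omega

lemma swap_sum (Q : Finset (ℤ × ℤ)) (F : ℤ × ℤ → ℤ × ℤ → ℝ) :
    ∑ x ∈ Q, ∑ y ∈ Q ∩ nbrs x, F x y = ∑ x ∈ Q, ∑ y ∈ Q ∩ nbrs x, F y x := by
  rw [Finset.sum_comm' (t' := Q) (s' := fun y => Q ∩ nbrs y)]
  intro x y
  simp only [Finset.mem_inter, mem_nbrs_symm (x := x) (y := y)]
  tauto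

lemma dsum_add (Q : Finset (ℤ × ℤ)) (A B : ℤ × ℤ → ℤ × ℤ → ℝ) :
    ∑ x ∈ Q, ∑ y ∈ Q ∩ nbrs x, (A x y + B x y)
      = (∑ x ∈ Q, ∑ y ∈ Q ∩ nbrs x, A x y) + ∑ x ∈ Q, ∑ y ∈ Q ∩ nbrs x, B x y := by
  rw [← Finset.sum_add_distrib]
  exact Finset.sum_congr rfl fun x _ => by rw [← Finset.sum_add_distrib]

lemma dsum_comb (Q : Finset (ℤ × ℤ)) (A B C : ℤ × ℤ → ℤ × ℤ → ℝ) :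
    ∑ x ∈ Q, ∑ y ∈ Q ∩ nbrs x, (A x y - 2 * B x y + C x y)
      = (∑ x ∈ Q, ∑ y ∈ Q ∩ nbrs x, A x y) - 2 * (∑ x ∈ Q, ∑ y ∈ Q ∩ nbrs x, B x y)
        + ∑ x ∈ Q, ∑ y ∈ Q ∩ nbrs x, C x y := by
  rw [Finset.mul_sum, ← Finset.sum_sub_distrib, ← Finset.sum_add_distrib]
  refine Finset.sum_congr rfl fun x _ => ?_
  rw [Finset.mul_sum, ← Finset.sum_sub_distrib, ← Finset.sum_add_distrib]

/-- Exact 'completing the square' identity: substituting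
`εα = (−Δ^N_Q + λ)g` into the free-boundary Hamiltonian gives
`−H_Q(σ) = (1/2)E_Q(g) − (1/2)E_Q(σ·e₁) − (1/2)E_Q(σ·e₂ − g) + λ Σ (σ·e₂) g`. -/
theorem stmt14 (Q : Finset (ℤ × ℤ)) (lam eps : ℝ) (hlam : 0 < lam) (heps : 0 < eps)
    (α g : ℤ × ℤ → ℝ)
    (hg : ∀ x ∈ Q, (∑ y ∈ Q ∩ nbrs x, (g x - g y)) + lam * g x = eps * α x)
    (σ : ℤ × ℤ → ℝ × ℝ)
    (hσ : ∀ x ∈ Q, (σ x).1 ^ 2 + (σ x).2 ^ 2 = 1) :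
    -(1 / 2) * ((1 / 2) * ∑ x ∈ Q, ∑ y ∈ Q ∩ nbrs x,
          (((σ x).1 - (σ y).1) ^ 2 + ((σ x).2 - (σ y).2) ^ 2))
        + eps * ∑ x ∈ Q, α x * (σ x).2
      = (1 / 2) * eInt Q g - (1 / 2) * eInt Q (fun x => (σ x).1)
        - (1 / 2) * eInt Q (fun x => (σ x).2 - g x)
        + lam * ∑ x ∈ Q, (σ x).2 * g x := by
  -- substitute εα using hg
  have hE : eps * ∑ x ∈ Q, α x * (σ x).2
      = (∑ x ∈ Q, (σ x).2 * (∑ y ∈ Q ∩ nbrs x, (g x - g y)))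
        + lam * ∑ x ∈ Q, (σ x).2 * g x := by
    rw [Finset.mul_sum, Finset.mul_sum, ← Finset.sum_add_distrib]
    refine Finset.sum_congr rfl fun x hx => ?_
    have h := hg x hx
    calc eps * (α x * (σ x).2) = (eps * α x) * (σ x).2 := by ring
      _ = (∑ y ∈ Q ∩ nbrs x, (g x - g y) + lam * g x) * (σ x).2 := by rw [h]
      _ = (σ x).2 * ∑ y ∈ Q ∩ nbrs x, (g x - g y) + lam * ((σ x).2 * g x) := by ring
  -- symmetrize the cross term
  have key : ∑ x ∈ Q, (σ x).2 * (∑ y ∈ Q ∩ nbrs x, (g x - g y))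
      = (1 / 2) * ∑ x ∈ Q, ∑ y ∈ Q ∩ nbrs x, ((σ x).2 - (σ y).2) * (g x - g y) := by
    have hsw : ∑ x ∈ Q, ∑ y ∈ Q ∩ nbrs x, (σ y).2 * (g x - g y)
        = ∑ x ∈ Q, ∑ y ∈ Q ∩ nbrs x, (σ x).2 * (g y - g x) :=
      swap_sum Q (fun x y => (σ y).2 * (g x - g y))
    have expand : ∑ x ∈ Q, ∑ y ∈ Q ∩ nbrs x, ((σ x).2 - (σ y).2) * (g x - g y)
        = (∑ x ∈ Q, ∑ y ∈ Q ∩ nbrs x, (σ x).2 * (g x - g y))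
          + ∑ x ∈ Q, ∑ y ∈ Q ∩ nbrs x, -((σ y).2 * (g x - g y)) := by
      rw [← dsum_add]
      exact Finset.sum_congr rfl fun x _ => Finset.sum_congr rfl fun y _ => by ring
    have neg : ∑ x ∈ Q, ∑ y ∈ Q ∩ nbrs x, (σ x).2 * (g y - g x)
        = ∑ x ∈ Q, ∑ y ∈ Q ∩ nbrs x, -((σ x).2 * (g x - g y)) := by
      exact Finset.sum_congr rfl fun x _ => Finset.sum_congr rfl fun y _ => by ring
    have hneg : ∑ x ∈ Q, ∑ y ∈ Q ∩ nbrs x, -((σ x).2 * (g x - g y))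
        = -∑ x ∈ Q, ∑ y ∈ Q ∩ nbrs x, (σ x).2 * (g x - g y) := by
      rw [← Finset.sum_neg_distrib]
      exact Finset.sum_congr rfl fun x _ => by rw [← Finset.sum_neg_distrib]
    have hneg' : ∑ x ∈ Q, ∑ y ∈ Q ∩ nbrs x, -((σ y).2 * (g x - g y))
        = -∑ x ∈ Q, ∑ y ∈ Q ∩ nbrs x, (σ y).2 * (g x - g y) := by
      rw [← Finset.sum_neg_distrib]
      exact Finset.sum_congr rfl fun x _ => by rw [← Finset.sum_neg_distrib]
    have hx : ∑ x ∈ Q, (σ x).2 * (∑ y ∈ Q ∩ nbrs x, (g x - g y))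
        = ∑ x ∈ Q, ∑ y ∈ Q ∩ nbrs x, (σ x).2 * (g x - g y) :=
      Finset.sum_congr rfl fun x _ => by rw [Finset.mul_sum]
    rw [hx, expand, hneg', hsw, neg, hneg]
    ring
  -- expand the third Dirichlet energy
  have hthird : ∑ x ∈ Q, ∑ y ∈ Q ∩ nbrs x,
        ((fun x => (σ x).2 - g x) x - (fun x => (σ x).2 - g x) y) ^ 2
      = (∑ x ∈ Q, ∑ y ∈ Q ∩ nbrs x, ((σ x).2 - (σ y).2) ^ 2)
        - 2 * (∑ x ∈ Q, ∑ y ∈ Q ∩ nbrs x, ((σ x).2 - (σ y).2) * (g x - g y))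
        + ∑ x ∈ Q, ∑ y ∈ Q ∩ nbrs x, (g x - g y) ^ 2 := by
    rw [← dsum_comb]
    exact Finset.sum_congr rfl fun x _ => Finset.sum_congr rfl fun y _ => by ring
  have hsplit : ∑ x ∈ Q, ∑ y ∈ Q ∩ nbrs x,
        (((σ x).1 - (σ y).1) ^ 2 + ((σ x).2 - (σ y).2) ^ 2)
      = (∑ x ∈ Q, ∑ y ∈ Q ∩ nbrs x, ((σ x).1 - (σ y).1) ^ 2)
        + ∑ x ∈ Q, ∑ y ∈ Q ∩ nbrs x, ((σ x).2 - (σ y).2) ^ 2 :=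
    dsum_add Q _ _
  simp only [eInt]
  rw [hE, key, hthird, hsplit]
  ring
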